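/- arXiv:1203.5147 — 6 statements merged into one kernel-verified Lean document; each statement's English description precedes it below -/
import Mathlib

section
/- Let U ⊆ ℂⁿ be a nonempty connected open set and let G be a finitely generated subgroup of the group of permutations of U all of whose elements are holomorphic. If the function x ↦ card(O_G(x)) (with value ∞ when the orbit O_G(x) is infinite) has finite Lebesgue integral over U (in the sense of the lower integral with values in ℝ≥0∞), then every G-orbit is finite and G is a finite group. -/
open MeasureTheory
open scoped Classical ENNReal
open Set Filter Metric
open scoped Topology

/-- A set all of whose points are isolated, in a second-countable space, is countable. -/
lemma my_countable_of_isolated {α : Type*} [TopologicalSpace α]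
    [SecondCountableTopology α] {Z : Set α}
    (h : ∀ z ∈ Z, ∃ W ∈ 𝓝 z, W ∩ Z ⊆ {z}) : Z.Countable := by
  obtain ⟨t, htZ, htc, hcov⟩ := TopologicalSpace.countable_cover_nhdsWithin
    (f := fun x => {x}) (s := Z) (fun x hx => by
      obtain ⟨W, hW, hWx⟩ := h x hx
      rw [mem_nhdsWithin_iff_exists_mem_nhds_inter]
      exact ⟨W, hW, hWx⟩)
  exact htc.mono (hcov.trans (by simp))

/-- Zero set of an analytic function on `ℂ` which is nowhere locally identically zero is null. -/
lemma my_oneDim_zero_null {V : Set ℂ} {f : ℂ → ℂ}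
    (hf : AnalyticOnNhd ℂ f V)
    (hne : ∀ x ∈ V, ¬ (∀ᶠ y in 𝓝 x, f y = 0)) :
    volume {x ∈ V | f x = 0} = 0 := by
  have hc : {x ∈ V | f x = 0}.Countable := by
    apply my_countable_of_isolated
    rintro z ⟨hzV, hz0⟩
    rcases (hf z hzV).eventually_eq_zero_or_eventually_ne_zero with h | h
    · exact absurd h (hne z hzV)
    · rw [eventually_nhdsWithin_iff, eventually_iff_exists_mem] at h
      obtain ⟨W, hWz, hW⟩ := h
      refine ⟨W, hWz, ?_⟩
      rintro y ⟨hyW, hyV, hy0⟩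
      by_contra hyz
      exact hW y hyW (by simpa using hyz) hy0
  exact hc.measure_zero _

/-- The continuous linear "cons" map `ℂ × ℂⁿ → ℂⁿ⁺¹`. -/
noncomputable def myInsCLM (n : ℕ) : (ℂ × (Fin n → ℂ)) →L[ℂ] (Fin (n + 1) → ℂ) :=
  ContinuousLinearMap.pi (fun i => Fin.cases (ContinuousLinearMap.fst ℂ ℂ (Fin n → ℂ))
    (fun j => (ContinuousLinearMap.proj j).comp (ContinuousLinearMap.snd ℂ ℂ (Fin n → ℂ))) i)

lemma myInsCLM_apply (n : ℕ) (p : ℂ × (Fin n → ℂ)) : myInsCLM n p = Fin.cons p.1 p.2 := by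
  funext i
  refine Fin.cases ?_ (fun j => ?_) i <;>
    simp [myInsCLM, ContinuousLinearMap.pi_apply]

set_option maxHeartbeats 1000000 in
/-- The zero set of an analytic function on an open subset of `ℂⁿ` which is nowhere locally
identically zero is a Lebesgue null set. -/
lemma my_slice_an₂ {n : ℕ} {g : ℂ × (Fin n → ℂ) → ℂ} {W : Set (ℂ × (Fin n → ℂ))}
    (hgan : AnalyticOnNhd ℂ g W) {t : ℂ} {w : Fin n → ℂ} (hw : (t, w) ∈ W) :
    AnalyticAt ℂ (fun w => g (t, w)) w :=
  (hgan _ hw).comp (analyticAt_const.prod analyticAt_id)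

lemma my_slice_an₁ {n : ℕ} {g : ℂ × (Fin n → ℂ) → ℂ} {W : Set (ℂ × (Fin n → ℂ))}
    (hgan : AnalyticOnNhd ℂ g W) {t : ℂ} {w : Fin n → ℂ} (hw : (t, w) ∈ W) :
    AnalyticAt ℂ (fun t => g (t, w)) t := by
  have h1 : AnalyticAt ℂ (fun s : ℂ => (s, w)) t := analyticAt_id.prod analyticAt_const
  exact AnalyticAt.comp_of_eq (hgan _ hw) h1 rfl

lemma my_zero_null : ∀ (n : ℕ) (U : Set (Fin n → ℂ)) (f : (Fin n → ℂ) → ℂ),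
    IsOpen U → AnalyticOnNhd ℂ f U →
    (∀ x ∈ U, ¬ (∀ᶠ y in 𝓝 x, f y = 0)) →
    volume {x ∈ U | f x = 0} = 0 := by
  intro n
  induction n with
  | zero =>
    intro U f hUo hf hne
    have : {x ∈ U | f x = 0} = (∅ : Set (Fin 0 → ℂ)) := by
      ext x
      simp only [mem_setOf_eq, mem_empty_iff_false, iff_false, not_and]
      intro hxU hfx
      exact hne x hxU (Filter.Eventually.of_forall fun y => by
        rw [Subsingleton.elim y x]; exact hfx)
    rw [this]; exact measure_empty
  | succ n ih =>
    intro U f hUo hf hne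
    apply measure_null_of_locally_null
    rintro x ⟨hxU, hfx0⟩
    set L := myInsCLM n with hLdef
    set eF : (Fin (n + 1) → ℂ) → ℂ × (Fin n → ℂ) :=
      fun y => (y 0, fun j => y ((0 : Fin (n + 1)).succAbove j)) with heFdef
    have heFc : Continuous eF :=
      (continuous_apply 0).prodMk (continuous_pi fun j => continuous_apply _)
    have hLe : ∀ y, L (eF y) = y := by
      intro y
      rw [hLdef, myInsCLM_apply]
      funext i
      refine Fin.cases ?_ (fun j => ?_) i
      · simp [heFdef]
      · simp [heFdef, Fin.succAbove_zero]
    have heL : ∀ p, eF (L p) = p := by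
      intro p
      rw [hLdef, myInsCLM_apply, heFdef]
      ext
      · simp
      · simp [Fin.succAbove_zero]
    set W := L ⁻¹' U with hWdef
    have hWo : IsOpen W := hUo.preimage (myInsCLM n).cont
    set g : ℂ × (Fin n → ℂ) → ℂ := fun p => f (L p) with hgdef
    have hgan : AnalyticOnNhd ℂ g W := fun p hp => (hf (L p) hp).comp ((myInsCLM n).analyticAt p)
    have hp₀ : eF x ∈ W := by rw [hWdef, mem_preimage, hLe]; exact hxU
    obtain ⟨r, hr0, hrW⟩ := Metric.isOpen_iff.mp hWo _ hp₀
    set B₁ : Set ℂ := Metric.ball (eF x).1 r with hB₁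
    set B₂ : Set (Fin n → ℂ) := Metric.ball (eF x).2 r with hB₂
    have hBW : B₁ ×ˢ B₂ ⊆ W := by
      rw [hB₁, hB₂, ball_prod_same]; exact hrW
    set N := eF ⁻¹' (B₁ ×ˢ B₂) with hNdef
    have hNx : N ∈ 𝓝 x := by
      refine (heFc.isOpen_preimage _ (isOpen_ball.prod isOpen_ball)).mem_nhds ?_
      exact ⟨mem_ball_self hr0, mem_ball_self hr0⟩
    obtain ⟨y₀, hy₀N, hy₀⟩ : ∃ y ∈ N, f y ≠ 0 := by
      by_contra h
      push_neg at h
      exact hne x hxU (Filter.eventually_of_mem hNx h)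
    have hq₀ : eF y₀ ∈ B₁ ×ˢ B₂ := hy₀N
    have hgq₀ : g (eF y₀) ≠ 0 := by
      rw [hgdef]; simpa [hLe] using hy₀
    set w₀ := (eF y₀).2 with hw₀
    -- slice functions are analytic
    have hslice_an : ∀ t ∈ B₁, AnalyticOnNhd ℂ (fun w => g (t, w)) B₂ := by
      intro t ht w hw
      exact my_slice_an₂ hgan (hBW ⟨ht, hw⟩)
    have hh₁an : AnalyticOnNhd ℂ (fun t => g (t, w₀)) B₁ := by
      intro t ht
      exact my_slice_an₁ hgan (hBW ⟨ht, hq₀.2⟩)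
    have hh₁ne : ∀ t ∈ B₁, ¬ (∀ᶠ s in 𝓝 t, g (s, w₀) = 0) := by
      intro t ht hev
      have h0 := hh₁an.eqOn_zero_of_preconnected_of_eventuallyEq_zero
        (convex_ball _ _).isPreconnected ht hev
      exact hgq₀ (h0 hq₀.1)
    have hE : volume {t ∈ B₁ | g (t, w₀) = 0} = 0 := my_oneDim_zero_null hh₁an hh₁ne
    set ZP : Set (ℂ × (Fin n → ℂ)) := {p ∈ B₁ ×ˢ B₂ | g p = 0} with hZPdef
    have hZPm : MeasurableSet ZP := by
      have hopen : IsOpen ((B₁ ×ˢ B₂) ∩ g ⁻¹' ({0}ᶜ)) :=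
        ContinuousOn.isOpen_inter_preimage (hgan.continuousOn.mono hBW)
          (isOpen_ball.prod isOpen_ball) isOpen_compl_singleton
      have : ZP = (B₁ ×ˢ B₂) \ ((B₁ ×ˢ B₂) ∩ g ⁻¹' ({0}ᶜ)) := by
        ext p
        simp only [hZPdef, mem_setOf_eq, mem_diff, mem_inter_iff, mem_preimage,
          mem_compl_iff, mem_singleton_iff]
        tauto
      rw [this]
      exact (isOpen_ball.prod isOpen_ball).measurableSet.diff hopen.measurableSet
    have hZP0 : (volume : Measure (ℂ × (Fin n → ℂ))) ZP = 0 := by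
      rw [Measure.volume_eq_prod, Measure.measure_prod_null hZPm]
      have hEae : ∀ᵐ t : ℂ, t ∉ {t ∈ B₁ | g (t, w₀) = 0} := measure_eq_zero_iff_ae_notMem.mp hE
      filter_upwards [hEae] with t ht
      show volume (Prod.mk t ⁻¹' ZP) = 0
      by_cases htB : t ∈ B₁
      · have hth : g (t, w₀) ≠ 0 := fun h0 => ht ⟨htB, h0⟩
        have hslice : Prod.mk t ⁻¹' ZP = {w ∈ B₂ | (fun w => g (t, w)) w = 0} := by
          ext w
          simp only [hZPdef, mem_preimage, mem_setOf_eq, mem_prod]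
          tauto
        rw [hslice]
        refine ih B₂ _ isOpen_ball (hslice_an t htB) ?_
        intro w hw hev
        have h0 := (hslice_an t htB).eqOn_zero_of_preconnected_of_eventuallyEq_zero
          (convex_ball _ _).isPreconnected hw hev
        exact hth (h0 hq₀.2)
      · have : Prod.mk t ⁻¹' ZP = ∅ := by
          ext w
          simp only [hZPdef, mem_preimage, mem_setOf_eq, mem_prod, mem_empty_iff_false,
            iff_false]
          tauto
        simp [this]
    -- transport back
    have hu0 : volume (eF ⁻¹' ZP) = 0 := by
      set e := MeasurableEquiv.piFinSuccAbove (fun _ : Fin (n + 1) => ℂ) 0 with hedef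
      have hee : eF ⁻¹' ZP = e ⁻¹' ZP := rfl
      have hmp : MeasurePreserving e volume volume :=
        volume_preserving_piFinSuccAbove (fun _ => ℂ) 0
      rw [hee, hmp.measure_preimage hZPm.nullMeasurableSet]
      exact hZP0
    refine ⟨eF ⁻¹' ZP, ?_, hu0⟩
    rw [mem_nhdsWithin_iff_exists_mem_nhds_inter]
    refine ⟨N, hNx, ?_⟩
    rintro y ⟨hyN, hyU, hyf⟩
    exact ⟨hyN, by rw [hgdef]; simpa [hLe] using hyf⟩

lemma my_countable_subgroup {M : Type*} [Group M] (G : Subgroup M) (hfg : G.FG) :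
    Countable G := by
  obtain ⟨S, hS⟩ := hfg
  set s : Set M := ↑S ∪ (↑S : Set M)⁻¹ with hs
  have hsc : s.Countable := (S.finite_toSet.union S.finite_toSet.inv).countable
  haveI := hsc.to_subtype
  have hsub : (↑(Subgroup.closure (↑S : Set M)) : Set M) ⊆
      Set.range (fun l : List s => (l.map Subtype.val).prod) := by
    intro x hx
    have hx' : x ∈ Submonoid.closure s := by
      rw [hs, ← Subgroup.closure_toSubmonoid]
      exact hx
    obtain ⟨l, hl, rfl⟩ := Submonoid.exists_list_of_mem_closure hx'
    refine ⟨l.pmap (fun y hy => (⟨y, hy⟩ : s)) hl, ?_⟩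
    simp [List.map_pmap]
  have hGc : (↑(Subgroup.closure (↑S : Set M)) : Set M).Countable :=
    (Set.countable_range _).mono hsub
  rw [hS] at hGc
  exact hGc.to_subtype


/-- If, for a finitely generated group of holomorphic permutations of a nonempty
connected open set `U ⊆ ℂⁿ`, the orbit-cardinality function has finite Lebesgue
(lower) integral over `U`, then all orbits are finite and the group is finite. -/
theorem finite_of_integrable_orbit_card
    {n : ℕ} (hn : 1 ≤ n) (U : Set (Fin n → ℂ)) (hUne : U.Nonempty)
    (hUo : IsOpen U) (hUc : IsConnected U)
    (G : Subgroup (Equiv.Perm U)) (hfg : G.FG)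
    (hhol : ∀ g ∈ G, ∀ x ∈ U, AnalyticAt ℂ
      (fun y => if h : y ∈ U then ((g ⟨y, h⟩ : U) : Fin n → ℂ) else y) x)
    (hint : (∫⁻ x in U, (if hx : x ∈ U then
        (((MulAction.orbit G (⟨x, hx⟩ : U)).encard : ℕ∞) : ℝ≥0∞) else 0)) < ⊤) :
    (∀ x : U, (MulAction.orbit G x).Finite) ∧ Finite G := by
  haveI : Countable G := my_countable_subgroup G hfg
  -- the extended map of a permutation
  set F : Equiv.Perm U → (Fin n → ℂ) → (Fin n → ℂ) :=
    fun σ y => if h : y ∈ U then ((σ ⟨y, h⟩ : U) : Fin n → ℂ) else y with hF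
  -- each nontrivial element has a null fixed-point set
  have hFixNull : ∀ g : G, g ≠ 1 → volume {x ∈ U | F (↑g) x = x} = 0 := by
    intro g hg1
    have hg1' : (↑g : Equiv.Perm U) ≠ 1 := by
      simpa using hg1
    obtain ⟨u₀, hu₀⟩ : ∃ u : U, (↑g : Equiv.Perm U) u ≠ u := by
      by_contra h
      push_neg at h
      exact hg1' (Equiv.ext fun u => h u)
    have hFu₀ : F (↑g) ↑u₀ - ↑u₀ ≠ 0 := by
      rw [hF]
      simp only [Subtype.coe_prop, ↓reduceDIte, Subtype.coe_eta]
      intro h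
      exact hu₀ (Subtype.coe_injective (by
        have := sub_eq_zero.mp h
        exact this))
    obtain ⟨i, hi⟩ := Function.ne_iff.mp hFu₀
    set φ : (Fin n → ℂ) → ℂ := fun y => (F (↑g) y - y) i with hφ
    have hφan : AnalyticOnNhd ℂ φ U := by
      intro x hx
      have h1 : AnalyticAt ℂ (fun y => F (↑g) y - y) x :=
        (hhol (↑g) g.2 x hx).sub analyticAt_id
      exact ((ContinuousLinearMap.proj i : ((Fin n → ℂ)) →L[ℂ] ℂ).analyticAt _).comp h1
    have hφu₀ : φ ↑u₀ ≠ 0 := by simpa [hφ] using hi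
    have hφne : ∀ x ∈ U, ¬ (∀ᶠ y in 𝓝 x, φ y = 0) := by
      intro x hx hev
      exact hφu₀ (hφan.eqOn_zero_of_preconnected_of_eventuallyEq_zero
        hUc.isPreconnected hx hev u₀.2)
    have h0 : volume {x ∈ U | φ x = 0} = 0 := my_zero_null n U φ hUo hφan hφne
    refine measure_mono_null ?_ h0
    rintro x ⟨hxU, hxfix⟩
    exact ⟨hxU, by simp [hφ, hxfix]⟩
  -- the group is finite
  have hGfin : Finite G := by
    by_contra hinf
    rw [not_finite_iff_infinite] at hinf
    set B : Set (Fin n → ℂ) := ⋃ (g : G) (_ : g ≠ 1), {x ∈ U | F (↑g) x = x} with hB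
    have hBnull : volume B = 0 :=
      measure_iUnion_null fun g => measure_iUnion_null fun hg => hFixNull g hg
    have hUpos : 0 < volume U := hUo.measure_pos volume hUne
    have hae : ∀ᵐ x ∂(volume.restrict U), (if hx : x ∈ U then
        (((MulAction.orbit G (⟨x, hx⟩ : U)).encard : ℕ∞) : ℝ≥0∞) else 0) = ⊤ := by
      have h1 : ∀ᵐ x ∂(volume.restrict U), x ∈ U := ae_restrict_mem hUo.measurableSet
      have h2 : ∀ᵐ x ∂(volume.restrict U), x ∉ B :=
        ae_restrict_of_ae (measure_eq_zero_iff_ae_notMem.mp hBnull)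
      filter_upwards [h1, h2] with x hxU hxB
      rw [dif_pos hxU]
      have hinj : Function.Injective (fun g : G => g • (⟨x, hxU⟩ : U)) := by
        intro a b hab
        by_contra hne
        have hc : a⁻¹ * b ≠ 1 := by
          intro h
          exact hne (by
            have := congrArg (a * ·) h
            simpa [mul_assoc] using this.symm)
        have hfix : (a⁻¹ * b) • (⟨x, hxU⟩ : U) = (⟨x, hxU⟩ : U) := by
          have hab' : a • (⟨x, hxU⟩ : U) = b • (⟨x, hxU⟩ : U) := hab
          rw [mul_smul, ← hab', ← mul_smul]
          simp
        apply hxB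
        rw [hB]
        refine Set.mem_iUnion.mpr ⟨a⁻¹ * b, Set.mem_iUnion.mpr ⟨hc, hxU, ?_⟩⟩
        rw [hF]
        simp only [dif_pos hxU]
        exact congrArg Subtype.val hfix
      have horb : (MulAction.orbit G (⟨x, hxU⟩ : U)).Infinite :=
        Set.infinite_range_of_injective hinj
      rw [horb.encard_eq]
      simp
    have htop : (∫⁻ x in U, (if hx : x ∈ U then
        (((MulAction.orbit G (⟨x, hx⟩ : U)).encard : ℕ∞) : ℝ≥0∞) else 0)) = ⊤ := by
      rw [lintegral_congr_ae hae, lintegral_const, Measure.restrict_apply_univ]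
      exact ENNReal.top_mul hUpos.ne'
    rw [htop] at hint
    exact absurd hint (lt_irrefl _)
  refine ⟨fun x => ?_, hGfin⟩
  have : MulAction.orbit G x = Set.range (fun g : G => g • x) := rfl
  rw [this]
  exact Set.finite_range _
end

section
/- Let U ⊆ ℂᵏ be a connected open neighborhood of the origin 0, and let G be a (not necessarily finitely generated) subgroup of the group of permutations of U all of whose elements are holomorphic and fix the origin (g(0) = 0 for all g ∈ G). Assume there is ℓ ≥ 1 such that every G-orbit in U is finite of cardinality at most ℓ. Then G is a finite group. -/
/-!
Differentiating at the common fixed point `0` turns `G` into a group `D(G)` of linear maps.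
Bounded orbits force `g ^ ℓ! = 1`, and a periodic holomorphic map tangent to the identity is the
identity (Cartan's lemma), so `D` is injective. At each point `t • v` at most `ℓ` values
`g (t • v)` occur, so among `ℓ + 1` elements one fixed pair agrees at points `t • v` with `t → 0`;
comparing difference quotients gives equal derivatives in the direction `v`. Hence `{D g v | g ∈ G}` has at most `ℓ` elements for each `v`, and `D(G)` is finite.
-/

open scoped Classical

open Filter Set Topology Function MulAction

theorem pow_factorial_smul_eq_self_of_encard_orbit_le {G X : Type*} [Group G] [MulAction G X]
    {ℓ : ℕ} {x : X} (hx : (orbit G x).encard ≤ ℓ) (g : G) : g ^ ℓ.factorial • x = x := by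
  have hsub : orbit (Subgroup.zpowers g) x ⊆ orbit G x := by
    rintro _ ⟨⟨h, _⟩, rfl⟩
    exact mem_orbit x h
  have hcard : (orbit (Subgroup.zpowers g) x).encard ≤ ℓ := (encard_le_encard hsub).trans hx
  have hfin : (orbit (Subgroup.zpowers g) x).Finite := finite_of_encard_le_coe hcard
  have : Fintype (orbit (Subgroup.zpowers g) x) := hfin.fintype
  have hle : minimalPeriod (g • ·) x ≤ ℓ := by
    rw [minimalPeriod_eq_card, ← Nat.card_eq_fintype_card, Nat.card_coe_set_eq,
      ← Nat.cast_le (α := ℕ∞), hfin.cast_ncard_eq]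
    exact hcard
  rw [pow_smul_eq_iff_minimalPeriod_dvd]
  exact Nat.dvd_factorial (Nat.pos_of_neZero _) hle

theorem Equiv.Perm.coe_ofSubtype {α : Type*} {p : α → Prop} [DecidablePred p]
    (f : Perm (Subtype p)) : ⇑(ofSubtype f) = fun a => if h : p a then (f ⟨a, h⟩ : α) else a := by
  funext a
  split_ifs with h
  exacts [ofSubtype_apply_of_mem f h, ofSubtype_apply_of_not_mem f h]

section

variable {𝕜 E F : Type*} [NontriviallyNormedField 𝕜] [NormedAddCommGroup E] [NormedSpace 𝕜 E]
  [NormedAddCommGroup F] [NormedSpace 𝕜 F]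

noncomputable def linearizationHom {M : Type*} [Monoid M] (ρ : M →* Equiv.Perm E) (x : E)
    (hdiff : ∀ g, DifferentiableAt 𝕜 (ρ g) x) (hfix : ∀ g, ρ g x = x) : M →* (E →L[𝕜] E) where
  toFun g := fderiv 𝕜 (ρ g) x
  map_one' := by simp only [map_one, Equiv.Perm.coe_one, fderiv_id]; rfl
  map_mul' g h := by
    rw [map_mul, Equiv.Perm.coe_mul, fderiv_comp x (by rw [hfix]; exact hdiff g) (hdiff h), hfix]
    rfl

theorem HasStrictFDerivAt.eventuallyEq_id_of_iterate [CharZero 𝕜] [CompleteSpace E]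
    {f : E → E} {x : E} (hf : HasStrictFDerivAt f (ContinuousLinearMap.id 𝕜 E) x)
    (hx : f x = x) {N : ℕ} (hN : 0 < N) (hper : ∀ᶠ y in 𝓝 x, f^[N] y = y) :
    f =ᶠ[𝓝 x] id := by
  -- The average of the iterates is a local chart in which `f` becomes the identity.
  set φ : E → E := fun y => (N : 𝕜)⁻¹ • ∑ j ∈ Finset.range N, f^[j] y
  have hφ : HasStrictFDerivAt φ
      ((ContinuousLinearEquiv.refl 𝕜 E : E ≃L[𝕜] E) : E →L[𝕜] E) x := by
    have hiter (j : ℕ) : HasStrictFDerivAt f^[j] (1 : E →L[𝕜] E) x := by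
      simpa [← ContinuousLinearMap.one_def] using hf.iterate hx j
    refine ((HasStrictFDerivAt.fun_sum fun j _ => hiter j).const_smul (N : 𝕜)⁻¹).congr_fderiv ?_
    ext v
    have hN' : (N : 𝕜) ≠ 0 := Nat.cast_ne_zero.2 hN.ne'
    simp [← Nat.cast_smul_eq_nsmul 𝕜, smul_smul, inv_mul_cancel₀ hN']
  have hφf : ∀ᶠ y in 𝓝 x, φ (f y) = φ y := by
    filter_upwards [hper] with y hy
    have hshift : ∑ j ∈ Finset.range N, f^[j] (f y) = ∑ j ∈ Finset.range N, f^[j] y := by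
      have h := (Finset.sum_range_succ' (fun j => f^[j] y) N).symm.trans
        (Finset.sum_range_succ (fun j => f^[j] y) N)
      rw [hy, iterate_zero_apply] at h
      simpa only [iterate_succ_apply] using add_right_cancel h
    simp only [φ, hshift]
  have hf_tendsto : Tendsto f (𝓝 x) (𝓝 x) := by
    simpa only [hx] using hf.continuousAt.tendsto
  filter_upwards [hφ.eventually_left_inverse, hf_tendsto.eventually hφ.eventually_left_inverse,
    hφf] with y hy hfy hφy
  rw [← hfy, hφy, hy, id]

theorem AnalyticOnNhd.eqOn_id_of_iterate [CharZero 𝕜] [CompleteSpace E] {f : E → E} {U : Set E}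
    (hf : AnalyticOnNhd 𝕜 f U) (hU : IsPreconnected U) {x : E} (hxU : x ∈ U) (hx : f x = x)
    (hD : fderiv 𝕜 f x = ContinuousLinearMap.id 𝕜 E) {N : ℕ} (hN : 0 < N)
    (hper : ∀ᶠ y in 𝓝 x, f^[N] y = y) : EqOn f id U :=
  hf.eqOn_of_preconnected_of_eventuallyEq analyticOnNhd_id hU hxU
    ((hD ▸ (hf x hxU).hasStrictFDerivAt).eventuallyEq_id_of_iterate hx hN hper)

theorem encard_range_deriv_le {ι : Type*} {f : ι → 𝕜 → F} {f' : ι → F} {x : 𝕜} {ℓ : ℕ}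
    (hf : ∀ i, HasDerivAt (f i) (f' i) x) (hfx : ∀ i j, f i x = f j x)
    (hℓ : ∀ᶠ t in 𝓝[≠] x, (range fun i => f i t).encard ≤ ℓ) :
    (range f').encard ≤ ℓ := by
  by_contra! hlt
  obtain ⟨u, hu, hinj⟩ := exists_image_eq_and_injOn univ f'
  rw [image_univ] at hu
  obtain ⟨T, hTu, hTcard⟩ := exists_subset_encard_eq (k := ℓ + 1) <| by
    rw [← hinj.encard_image, hu]
    exact Order.add_one_le_of_lt hlt
  have hTfin : T.Finite := finite_of_encard_eq_coe hTcard
  have hcollide : ∀ᶠ t in 𝓝[≠] x, ∃ i ∈ T, ∃ j ∈ T, i ≠ j ∧ f i t = f j t := by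
    filter_upwards [hℓ] with t ht
    by_contra! hne
    have hinjt : InjOn (f · t) T := fun i hi j hj hij => by_contra fun h => hne i hi j hj h hij
    have hle : T.encard ≤ ℓ :=
      hinjt.encard_image ▸ (encard_le_encard (image_subset_range _ _)).trans ht
    rw [hTcard] at hle
    norm_cast at hle
    omega
  obtain ⟨i, hi, j, hj, hfreq⟩ : ∃ i ∈ T, ∃ j ∈ T, ∃ᶠ t in 𝓝[≠] x, i ≠ j ∧ f i t = f j t := by
    simpa only [hTfin.frequently_exists] using hcollide.frequently
  have hslope : f' i = f' j := tendsto_nhds_unique_of_frequently_eq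
    (hasDerivAt_iff_tendsto_slope.1 (hf i)) (hasDerivAt_iff_tendsto_slope.1 (hf j))
    (hfreq.mono fun t ht => by simp only [slope_def_module, ht.2, hfx i j])
  obtain ⟨t, hij, -⟩ := hfreq.exists
  exact hij (hinj (hTu hi) (hTu hj) hslope)

theorem encard_range_fderiv_apply_le {ι : Type*} {f : ι → E → F} {f' : ι → E →L[𝕜] F} {x : E}
    {ℓ : ℕ} (hf : ∀ i, HasFDerivAt (f i) (f' i) x) (hfx : ∀ i j, f i x = f j x)
    (hℓ : ∀ᶠ y in 𝓝 x, (range fun i => f i y).encard ≤ ℓ) (v : E) :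
    (range fun i => f' i v).encard ≤ ℓ := by
  have hline : HasDerivAt (fun t : 𝕜 => x + t • v) v 0 := by
    simpa using ((hasDerivAt_id (0 : 𝕜)).smul_const v).const_add x
  have hline_tendsto : Tendsto (fun t : 𝕜 => x + t • v) (𝓝[≠] 0) (𝓝 x) :=
    (Continuous.tendsto' (by fun_prop) 0 x (by simp)).mono_left nhdsWithin_le_nhds
  exact encard_range_deriv_le (f := fun i t => f i (x + t • v))
    (fun i => (hf i).comp_hasDerivAt_of_eq 0 hline (by simp)) (by simpa using hfx)
    (hline_tendsto.eventually hℓ)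

theorem finite_of_injective_of_finite_range_apply [FiniteDimensional 𝕜 E] {ι : Type*}
    {f : ι → E →L[𝕜] F} (hf : Injective f) (hfin : ∀ v, (range fun i => f i v).Finite) :
    Finite ι := by
  set b := Module.finBasis 𝕜 E
  have hinj : Injective fun i j => f i (b j) := fun i i' h =>
    hf (ContinuousLinearMap.coe_injective (b.ext fun j => congrFun h j))
  rw [← finite_range_iff hinj]
  exact (Set.Finite.pi fun j => hfin (b j)).subset
    (range_subset_iff.2 fun i j _ => mem_range_self i)

end

theorem finite_of_uniformly_bounded_orbits_fixing_origin_general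
    {k : ℕ} (U : Set (Fin k → ℂ)) (hUo : IsOpen U) (hUc : IsConnected U)
    (h0 : (0 : Fin k → ℂ) ∈ U)
    (G : Subgroup (Equiv.Perm U))
    (hhol : ∀ g ∈ G, ∀ x ∈ U, AnalyticAt ℂ
      (fun y => if h : y ∈ U then ((g ⟨y, h⟩ : U) : Fin k → ℂ) else y) x)
    (hfix : ∀ g ∈ G, g ⟨0, h0⟩ = ⟨0, h0⟩)
    (ℓ : ℕ)
    (horb : ∀ x : U, (MulAction.orbit G x).encard ≤ (ℓ : ℕ∞)) :
    Finite G := by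
  set ρ : G →* Equiv.Perm (Fin k → ℂ) := Equiv.Perm.ofSubtype.comp G.subtype
  have hρ_mem (g : G) {y} (hy : y ∈ U) : ρ g y = ((g : Equiv.Perm U) ⟨y, hy⟩ : Fin k → ℂ) :=
    Equiv.Perm.ofSubtype_apply_of_mem _ hy
  have hρ_an (g : G) : AnalyticOnNhd ℂ (ρ g) U :=
    Equiv.Perm.coe_ofSubtype (g : Equiv.Perm U) ▸ hhol g g.2
  have hρ0 (g : G) : ρ g 0 = 0 := by rw [hρ_mem g h0, hfix g g.2]
  set D := linearizationHom ρ 0 (fun g => (hρ_an g 0 h0).differentiableAt) hρ0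
  have hD_inj : Injective D := by
    refine (injective_iff_map_eq_one D).2 fun g hg => ?_
    have hexp : g ^ ℓ.factorial = 1 :=
      Subtype.ext <| Equiv.ext fun y => pow_factorial_smul_eq_self_of_encard_orbit_le (horb y) g
    have hper : (ρ g)^[ℓ.factorial] = id := by
      rw [← Equiv.Perm.coe_pow, ← map_pow, hexp, map_one, Equiv.Perm.coe_one]
    have hid : EqOn (ρ g) id U := (hρ_an g).eqOn_id_of_iterate hUc.isPreconnected h0 (hρ0 g) hg
      (Nat.factorial_pos ℓ) (Eventually.of_forall (congrFun hper))
    exact Subtype.ext <| Equiv.ext fun y => Subtype.ext <| (hρ_mem g y.2).symm.trans (hid y.2)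
  have hD_range (v : Fin k → ℂ) : (range fun g => D g v).encard ≤ ℓ := by
    refine encard_range_fderiv_apply_le (fun g => (hρ_an g 0 h0).differentiableAt.hasFDerivAt)
      (fun g g' => by rw [hρ0, hρ0]) ?_ v
    filter_upwards [hUo.mem_nhds h0] with y hy
    refine (encard_le_encard ?_).trans ((encard_image_le Subtype.val _).trans (horb ⟨y, hy⟩))
    rintro _ ⟨g, rfl⟩
    exact ⟨_, mem_orbit _ g, (hρ_mem g hy).symm⟩
  exact finite_of_injective_of_finite_range_apply hD_inj fun v =>
    finite_of_encard_le_coe (hD_range v)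

/-- A (not necessarily finitely generated) group of holomorphic permutations of a
connected open neighborhood `U ⊆ ℂᵏ` of the origin, all of whose elements fix the
origin, with all orbits finite of uniformly bounded cardinality `≤ ℓ`, is finite. -/
theorem finite_of_uniformly_bounded_orbits_fixing_origin
    {k : ℕ} (hk : 1 ≤ k) (U : Set (Fin k → ℂ)) (hUo : IsOpen U) (hUc : IsConnected U)
    (h0 : (0 : Fin k → ℂ) ∈ U)
    (G : Subgroup (Equiv.Perm U))
    (hhol : ∀ g ∈ G, ∀ x ∈ U, AnalyticAt ℂ
      (fun y => if h : y ∈ U then ((g ⟨y, h⟩ : U) : Fin k → ℂ) else y) x)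
    (hfix : ∀ g ∈ G, g ⟨0, h0⟩ = ⟨0, h0⟩)
    (ℓ : ℕ) (hℓ : 1 ≤ ℓ)
    (horb : ∀ x : U, (MulAction.orbit G x).encard ≤ (ℓ : ℕ∞)) :
    Finite G :=
  finite_of_uniformly_bounded_orbits_fixing_origin_general U hUo hUc h0 G hhol hfix ℓ horb
end

section
/- Let U ⊆ ℂⁿ be a nonempty connected open set, let G be a subgroup of the group of permutations of U all of whose elements are holomorphic, and let p ∈ U be a point fixed by every element of G. Assume there is a fundamental system of neighborhoods {V_ν} of p inside U (i.e., a family of subsets of U, each a neighborhood of p, such that every neighborhood of p contains some V_ν) with the property that each V_ν is invariant under every element of G and every point of each V_ν has finite G-orbit. Then G is a finite group. -/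
/-!
By Baire's theorem, some closed set of points whose orbits have at most `m` elements has
interior; `γ ^ m!` fixes that open set for every `γ ∈ G`, so by the identity theorem `G` has
finite exponent `N`. Cartan's averaging trick shows that an element of finite order which
fixes `p` and is tangent to the identity there is the identity, so `g ↦ dg(p)` is a faithful
linear representation of `G`. A complex linear group of finite exponent is finite (Burnside):
traces of its elements are sums of `N`-th roots of unity, hence finitely many, only the
identity has trace equal to the dimension, and an element `g` is determined by the traces of
`g b` for `b` in a basis of the span of the group.
-/

open scoped Classical

open Filter Topology

theorem Complex.eq_one_of_norm_le_one_of_sum_eq_card {s : Multiset ℂ}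
    (hs : ∀ z ∈ s, ‖z‖ ≤ 1) (hsum : s.sum = Multiset.card s) : ∀ z ∈ s, z = 1 := by
  have hre : ∀ z ∈ s, z.re ≤ 1 := fun z hz => (re_le_norm z).trans (hs z hz)
  have hre1 : ∀ z ∈ s, z.re = 1 := by
    by_contra! ⟨z, hz, hne⟩
    have hlt := Multiset.sum_lt_sum hre ⟨z, hz, (hre z hz).lt_of_ne hne⟩
    have hsum_re : (s.map re).sum = s.sum.re := (map_multiset_sum reAddGroupHom s).symm
    simp [hsum_re, hsum] at hlt
  intro z hz
  have him : z.im ^ 2 ≤ 0 := by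
    have := sq_norm_sub_sq_re z
    nlinarith [hs z hz, norm_nonneg z, hre1 z hz]
  exact Complex.ext (hre1 z hz) (pow_eq_zero_iff two_ne_zero |>.1 (le_antisymm him (sq_nonneg _)))

namespace Module.End

open Polynomial LinearMap

section Field

variable {K V : Type*} [Field K] [AddCommGroup V] [Module K V] [FiniteDimensional K V]

theorem pow_eq_one_of_isRoot_charpoly {f : End K V} {N : ℕ} (hf : f ^ N = 1) {μ : K}
    (hμ : f.charpoly.IsRoot μ) : μ ^ N = 1 := by
  obtain ⟨v, hv⟩ := (((hasEigenvalue_iff_isRoot_charpoly f μ).2 hμ).pow N).exists_hasEigenvector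
  have := hv.apply_eq_smul
  rw [hf, one_apply] at this
  exact smul_left_injective K hv.2 (this.symm.trans (one_smul K v).symm)

theorem card_roots_charpoly [IsAlgClosed K] (f : End K V) :
    Multiset.card f.charpoly.roots = finrank K V := by
  rw [splits_iff_card_roots.1 (IsAlgClosed.splits _), charpoly_natDegree]

theorem finite_trace_image_setOf_pow_eq_one [IsAlgClosed K] {N : ℕ} (hN : N ≠ 0) :
    (trace K V '' {f | f ^ N = 1}).Finite := by
  refine (((nthRootsFinset N (1 : K)).sym (finrank K V)).finite_toSet.image
    fun m : Sym K (finrank K V) => (m : Multiset K).sum).subset ?_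
  rintro _ ⟨f, hf, rfl⟩
  refine ⟨⟨f.charpoly.roots, card_roots_charpoly f⟩, Finset.mem_sym_iff.2 fun μ hμ => ?_,
    (trace_eq_sum_roots_charpoly_of_splits (IsAlgClosed.splits _)).symm⟩
  exact (mem_nthRootsFinset (Nat.pos_of_ne_zero hN) 1).2
    (pow_eq_one_of_isRoot_charpoly hf (isRoot_of_mem_roots hμ))

end Field

variable {V : Type*} [AddCommGroup V] [Module ℂ V] [FiniteDimensional ℂ V]

theorem eq_one_of_pow_eq_one_of_trace_eq_finrank {f : End ℂ V} {N : ℕ} (hN : N ≠ 0)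
    (hf : f ^ N = 1) (htr : trace ℂ V f = finrank ℂ V) : f = 1 := by
  have hsplit : f.charpoly.Splits := IsAlgClosed.splits _
  have hcard := card_roots_charpoly f
  have hroots : f.charpoly.roots = Multiset.replicate (finrank ℂ V) 1 := by
    refine Multiset.eq_replicate.2 ⟨hcard, Complex.eq_one_of_norm_le_one_of_sum_eq_card
      (fun μ hμ => ?_) ?_⟩
    · exact (Complex.norm_eq_one_of_pow_eq_one
        (pow_eq_one_of_isRoot_charpoly hf (isRoot_of_mem_roots hμ)) hN).le
    · rw [← trace_eq_sum_roots_charpoly_of_splits hsplit, htr, hcard]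
  have hcharpoly : f.charpoly = (X - C 1) ^ finrank ℂ V := by
    rw [← prod_multiset_X_sub_C_of_monic_of_roots_card_eq (charpoly_monic f)
      (by rw [hcard, charpoly_natDegree]), hroots, Multiset.map_replicate,
      Multiset.prod_replicate]
  have hnil : IsNilpotent (f - 1) :=
    ⟨finrank ℂ V, by simpa [hcharpoly] using aeval_self_charpoly f⟩
  have hss : f.IsSemisimple := by
    refine isSemisimple_of_squarefree_aeval_eq_zero
      (separable_X_pow_sub_C 1 (by exact_mod_cast hN) one_ne_zero).squarefree ?_
    simp [hf]
  have hss' : (f - algebraMap ℂ (End ℂ V) 1).IsSemisimple := isSemisimple_sub_algebraMap_iff.2 hss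
  rw [map_one] at hss'
  exact sub_eq_zero.1 (eq_zero_of_isNilpotent_isSemisimple hnil hss')

theorem finite_of_injective_of_pow_eq_one {Γ : Type*} [Group Γ] (ρ : Γ →* End ℂ V)
    (hρ : Function.Injective ρ) {N : ℕ} (hN : N ≠ 0) (hexp : ∀ γ : Γ, γ ^ N = 1) :
    Finite Γ := by
  obtain ⟨s, hs_range, hs_span, hs_li⟩ := exists_linearIndependent ℂ (Set.range ρ)
  have : Finite s := hs_li.finite
  set T := trace ℂ V '' {f | f ^ N = 1}
  have : Finite T := (finite_trace_image_setOf_pow_eq_one hN).to_subtype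
  have hT : ∀ γ, trace ℂ V (ρ γ) ∈ T := fun γ => ⟨ρ γ, by simp [← map_pow, hexp], rfl⟩
  let traces (γ : Γ) (b : s) : T :=
    ⟨trace ℂ V (ρ γ * b), by obtain ⟨δ, hδ⟩ := hs_range b.2; rw [← hδ, ← map_mul]; exact hT _⟩
  refine _root_.Finite.of_injective traces fun γ₁ γ₂ h => ?_
  -- The functionals `trace (ρ γᵢ * ·)` agree on `s`, hence on its span, which contains `ρ γ₁⁻¹`.
  have hspan : Set.EqOn (trace ℂ V ∘ₗ mulLeft ℂ (ρ γ₁)) (trace ℂ V ∘ₗ mulLeft ℂ (ρ γ₂))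
      (Submodule.span ℂ s) :=
    LinearMap.eqOn_span' fun b hb => congrArg Subtype.val (congrFun h ⟨b, hb⟩)
  have htr : trace ℂ V (ρ (γ₂ * γ₁⁻¹)) = finrank ℂ V := by
    have := hspan (hs_span ▸ Submodule.subset_span ⟨γ₁⁻¹, rfl⟩ : ρ γ₁⁻¹ ∈ Submodule.span ℂ s)
    simp only [comp_apply, mulLeft_apply, ← map_mul, mul_inv_cancel, map_one, trace_one] at this
    rw [this]
  have h1 := eq_one_of_pow_eq_one_of_trace_eq_finrank hN (by rw [← map_pow, hexp, map_one]) htr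
  rw [← map_one ρ] at h1
  exact (mul_inv_eq_one.1 (hρ h1)).symm

end Module.End

section FixedPointGerm

variable {𝕜 E : Type*} [NontriviallyNormedField 𝕜] [CharZero 𝕜] [NormedAddCommGroup E]
  [NormedSpace 𝕜 E] [CompleteSpace E]

theorem eventuallyEq_id_of_iterate_eventuallyEq_id {f : E → E} {p : E} {N : ℕ} (hN : N ≠ 0)
    (hf : HasStrictFDerivAt f (ContinuousLinearMap.id 𝕜 E) p) (hfp : f p = p)
    (hper : f^[N] =ᶠ[𝓝 p] id) : f =ᶠ[𝓝 p] id := by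
  -- The average `φ` of the iterates is a local diffeomorphism at `p` with `φ ∘ f = φ`.
  set φ : E → E := fun y => (N : 𝕜)⁻¹ • ∑ k ∈ Finset.range N, f^[k] y
  have hφ : HasStrictFDerivAt φ (ContinuousLinearEquiv.refl 𝕜 E : E →L[𝕜] E) p := by
    have := (HasStrictFDerivAt.fun_sum (u := Finset.range N) fun k _ =>
      hf.iterate hfp k).const_smul (N : 𝕜)⁻¹
    convert this using 1
    · rfl
    · rw [show ContinuousLinearMap.id 𝕜 E = 1 from rfl]
      ext v
      simp [← Nat.cast_smul_eq_nsmul 𝕜, smul_smul, hN]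
  have hφf : ∀ᶠ y in 𝓝 p, φ (f y) = φ y := hper.mono fun y hy => by
    have hshift := (Finset.sum_range_succ' (f^[·] y) N).symm.trans
      (Finset.sum_range_succ (f^[·] y) N)
    simp only [Function.iterate_succ_apply, Function.iterate_zero_apply, hy, id,
      add_left_inj] at hshift
    simp only [φ, hshift]
  have hf_tendsto : Tendsto f (𝓝 p) (𝓝 p) := by simpa only [hfp] using hf.continuousAt.tendsto
  filter_upwards [hφ.eventually_left_inverse, hf_tendsto.eventually hφ.eventually_left_inverse,
    hφf] with y hy hfy hφy
  rw [← hfy, hφy, hy, id]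

end FixedPointGerm

section FiniteOrbits

open MulAction

variable (Γ X : Type*) [Group Γ] [MulAction Γ X]

/-- The points whose orbit has at most `m` elements, phrased through the pigeonhole principle
so that the set is visibly closed. -/
def setOfOrbitCardLE (m : ℕ) : Set X :=
  {y | ∀ g : Fin (m + 1) → Γ, ∃ i j, i ≠ j ∧ g i • y = g j • y}

variable {Γ X}

theorem exists_mem_setOfOrbitCardLE {y : X} (hy : (orbit Γ y).Finite) :
    ∃ m, y ∈ setOfOrbitCardLE Γ X m := by
  refine ⟨hy.toFinset.card, fun g => ?_⟩
  obtain ⟨i, -, j, -, hij, h⟩ := Finset.exists_ne_map_eq_of_card_lt_of_maps_to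
    (s := Finset.univ) (t := hy.toFinset) (by simp) (f := fun i => g i • y)
    fun i _ => by simp
  exact ⟨i, j, hij, h⟩

theorem pow_factorial_smul_eq_self {m : ℕ} {y : X} (hy : y ∈ setOfOrbitCardLE Γ X m) (γ : Γ) :
    γ ^ m.factorial • y = y := by
  have key : ∀ a b : ℕ, a < b → b ≤ m → γ ^ a • y = γ ^ b • y → γ ^ m.factorial • y = y := by
    intro a b hab hbm h
    have hfix : γ ^ (b - a) ∈ stabilizer Γ y := by
      rwa [← pow_mul_pow_sub γ hab.le, mul_smul, eq_comm, smul_left_cancel_iff] at h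
    obtain ⟨c, hc⟩ := Nat.dvd_factorial (Nat.sub_pos_of_lt hab) ((Nat.sub_le b a).trans hbm)
    rw [hc, pow_mul]
    exact Subgroup.pow_mem _ hfix c
  obtain ⟨i, j, hij, h⟩ := hy fun i : Fin (m + 1) => γ ^ (i : ℕ)
  rcases Fin.val_ne_of_ne hij |>.lt_or_gt with hlt | hlt
  · exact key i j hlt (Nat.lt_succ_iff.1 j.2) h
  · exact key j i hlt (Nat.lt_succ_iff.1 i.2) h.symm

variable [TopologicalSpace X] [T2Space X] [ContinuousConstSMul Γ X]

theorem isClosed_setOfOrbitCardLE (m : ℕ) : IsClosed (setOfOrbitCardLE Γ X m) := by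
  rw [setOfOrbitCardLE, Set.ofPred_forall]
  simp only [Set.ofPred_exists, Set.ofPred_and]
  exact isClosed_iInter fun g => isClosed_iUnion_of_finite fun i =>
    isClosed_iUnion_of_finite fun j => isClosed_const.inter
      (isClosed_eq (continuous_const_smul _) (continuous_const_smul _))

theorem exists_isOpen_forall_pow_smul_eq_self [BaireSpace X] {O : Set X} (hO : IsOpen O)
    (hne : O.Nonempty) (hfin : ∀ y ∈ O, (orbit Γ y).Finite) :
    ∃ N ≠ 0, ∃ W : Set X, IsOpen W ∧ W.Nonempty ∧ ∀ γ : Γ, ∀ y ∈ W, γ ^ N • y = y := by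
  obtain ⟨m, hm⟩ : ∃ m, (interior (setOfOrbitCardLE Γ X m)).Nonempty := by
    by_contra! h
    refine not_isMeagre_of_isOpen hO hne (IsMeagre.mono (fun y hy => ?_) (isMeagre_iUnion
      fun m => ((isClosed_setOfOrbitCardLE m).isNowhereDense_iff.2 (h m)).isMeagre))
    exact Set.mem_iUnion.2 (exists_mem_setOfOrbitCardLE (hfin y hy))
  exact ⟨m.factorial, m.factorial_ne_zero, _, isOpen_interior, hm,
    fun γ y hy => pow_factorial_smul_eq_self (interior_subset hy) γ⟩

end FiniteOrbits

namespace Equiv.Perm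

theorem coe_ofSubtype_eq_dite {α : Type*} {p : α → Prop} [DecidablePred p]
    (g : Perm (Subtype p)) : ⇑(ofSubtype g) = fun a => if h : p a then (g ⟨a, h⟩ : α) else a := by
  ext1 a
  by_cases h : p a <;> simp [h, ofSubtype_apply_of_mem, ofSubtype_apply_of_not_mem]

theorem continuous_of_continuousOn_ofSubtype {α : Type*} [TopologicalSpace α] {U : Set α}
    [DecidablePred (· ∈ U)] {g : Perm U} (hg : ContinuousOn (ofSubtype g) U) : Continuous g :=
  continuous_induced_rng.2 (hg.domRestrict.congr fun y => ofSubtype_apply_coe g y)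

variable {𝕜 E : Type*} [NontriviallyNormedField 𝕜] [NormedAddCommGroup E] [NormedSpace 𝕜 E]
  {U : Set E} [DecidablePred (· ∈ U)]

theorem eq_one_of_ofSubtype_eventuallyEq_id (hU : IsPreconnected U) {g : Perm U}
    (hg : AnalyticOnNhd 𝕜 (ofSubtype g) U) {x : E} (hx : x ∈ U) (hid : ofSubtype g =ᶠ[𝓝 x] id) :
    g = 1 := by
  have heq := hg.eqOn_of_preconnected_of_eventuallyEq analyticOnNhd_id hU hx hid
  ext y
  simpa using heq y.2

theorem eq_one_of_forall_mem_isOpen_apply_eq (hUo : IsOpen U) (hU : IsPreconnected U)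
    {g : Perm U} (hg : AnalyticOnNhd 𝕜 (ofSubtype g) U) {W : Set U} (hWo : IsOpen W)
    (hWne : W.Nonempty) (hW : ∀ y ∈ W, g y = y) : g = 1 := by
  obtain ⟨w, hw⟩ := hWne
  refine eq_one_of_ofSubtype_eventuallyEq_id hU hg w.2 ?_
  filter_upwards [(hUo.isOpenMap_subtype_val W hWo).mem_nhds (Set.mem_image_of_mem _ hw)]
  rintro _ ⟨y, hy, rfl⟩
  simp [hW y hy]

theorem eq_one_of_pow_eq_one_of_fderiv_eq_id [CharZero 𝕜] [CompleteSpace E]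
    (hU : IsPreconnected U) {g : Perm U} (hg : AnalyticOnNhd 𝕜 (ofSubtype g) U) {p : U}
    (hp : g p = p) {N : ℕ} (hN : N ≠ 0) (hgN : g ^ N = 1)
    (hid : fderiv 𝕜 (ofSubtype g) p = ContinuousLinearMap.id 𝕜 E) : g = 1 := by
  have hf := (hg p p.2).hasStrictFDerivAt
  rw [hid] at hf
  refine eq_one_of_ofSubtype_eventuallyEq_id hU hg p.2
    (eventuallyEq_id_of_iterate_eventuallyEq_id hN hf (by simp [hp]) (Eventually.of_forall ?_))
  intro y
  rw [← coe_pow, ← map_pow, hgN, map_one]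
  rfl

end Equiv.Perm

section Isotropy

variable (𝕜 : Type*) {E M : Type*} [NontriviallyNormedField 𝕜] [NormedAddCommGroup E]
  [NormedSpace 𝕜 E] [Monoid M]

noncomputable def isotropyRep (φ : M →* Equiv.Perm E) {p : E} (hp : ∀ γ, φ γ p = p)
    (hφ : ∀ γ, DifferentiableAt 𝕜 (φ γ) p) : M →* E →L[𝕜] E where
  toFun γ := fderiv 𝕜 (φ γ) p
  map_one' := by simp only [map_one, Equiv.Perm.coe_one, fderiv_id]; rfl
  map_mul' γ δ := by
    simp only [map_mul, Equiv.Perm.coe_mul]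
    rw [fderiv_comp _ ((hp δ).symm ▸ hφ γ) (hφ δ), hp δ]
    rfl

end Isotropy

theorem finite_of_invariant_fundamental_system_general
    {n : ℕ} (U : Set (Fin n → ℂ))
    (hUo : IsOpen U) (hUc : IsConnected U)
    (G : Subgroup (Equiv.Perm U))
    (hhol : ∀ g ∈ G, ∀ x ∈ U, AnalyticAt ℂ
      (fun y => if h : y ∈ U then ((g ⟨y, h⟩ : U) : Fin n → ℂ) else y) x)
    (p : U) (hfix : ∀ g ∈ G, g p = p)
    (ι : Type) (V : ι → Set (Fin n → ℂ))
    (hVnhds : ∀ ν, V ν ∈ nhds (p : Fin n → ℂ))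
    (hVfund : ∀ W ∈ nhds (p : Fin n → ℂ), ∃ ν, V ν ⊆ W)
    (hVorb : ∀ ν, ∀ x : U, (x : Fin n → ℂ) ∈ V ν → (MulAction.orbit G x).Finite) :
    Finite G := by
  have hG : ∀ g : G, AnalyticOnNhd ℂ (Equiv.Perm.ofSubtype (g : Equiv.Perm U)) U :=
    fun g x hx => Equiv.Perm.coe_ofSubtype_eq_dite (g : Equiv.Perm U) ▸ hhol g g.2 x hx
  have : ContinuousConstSMul G U :=
    ⟨fun g => Equiv.Perm.continuous_of_continuousOn_ofSubtype (hG g).continuousOn⟩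
  have : BaireSpace U := hUo.baireSpace
  obtain ⟨ν, -⟩ := hVfund Set.univ Filter.univ_mem
  obtain ⟨N, hN, W, hWo, hWne, hW⟩ := exists_isOpen_forall_pow_smul_eq_self (Γ := G)
    (isOpen_interior.preimage continuous_subtype_val) ⟨p, mem_interior_iff_mem_nhds.2 (hVnhds ν)⟩
    fun x hx => hVorb ν x (interior_subset hx)
  have hexp : ∀ g : G, g ^ N = 1 := fun g => Subtype.ext <|
    Equiv.Perm.eq_one_of_forall_mem_isOpen_apply_eq hUo hUc.isPreconnected (hG (g ^ N)) hWo hWne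
      (hW g)
  let ρ := isotropyRep ℂ (Equiv.Perm.ofSubtype.comp G.subtype) (p := p)
    (fun g => by simp [hfix g g.2]) fun g => (hG g p p.2).differentiableAt
  refine Module.End.finite_of_injective_of_pow_eq_one
    (ContinuousLinearMap.toLinearMapRingHom.toMonoidHom.comp ρ) ?_ hN hexp
  refine (injective_iff_map_eq_one _).2 fun g hg => Subtype.ext <|
    Equiv.Perm.eq_one_of_pow_eq_one_of_fderiv_eq_id hUc.isPreconnected (hG g) (hfix g g.2) hN
      (congrArg Subtype.val (hexp g)) (ContinuousLinearMap.coe_injective hg)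

/-- A group of holomorphic permutations of a nonempty connected open set `U ⊆ ℂⁿ`
fixing a point `p ∈ U` which admits a fundamental system of `G`-invariant
neighborhoods of `p` inside `U`, all of whose points have finite `G`-orbit,
is finite. -/
theorem finite_of_invariant_fundamental_system
    {n : ℕ} (hn : 1 ≤ n) (U : Set (Fin n → ℂ)) (hUne : U.Nonempty)
    (hUo : IsOpen U) (hUc : IsConnected U)
    (G : Subgroup (Equiv.Perm U))
    (hhol : ∀ g ∈ G, ∀ x ∈ U, AnalyticAt ℂ
      (fun y => if h : y ∈ U then ((g ⟨y, h⟩ : U) : Fin n → ℂ) else y) x)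
    (p : U) (hfix : ∀ g ∈ G, g p = p)
    (ι : Type) (V : ι → Set (Fin n → ℂ))
    (hVsub : ∀ ν, V ν ⊆ U)
    (hVnhds : ∀ ν, V ν ∈ nhds (p : Fin n → ℂ))
    (hVfund : ∀ W ∈ nhds (p : Fin n → ℂ), ∃ ν, V ν ⊆ W)
    (hVinv : ∀ ν, ∀ g ∈ G, ∀ x : U, (x : Fin n → ℂ) ∈ V ν ↔ (g x : Fin n → ℂ) ∈ V ν)
    (hVorb : ∀ ν, ∀ x : U, (x : Fin n → ℂ) ∈ V ν → (MulAction.orbit G x).Finite) :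
    Finite G :=
  finite_of_invariant_fundamental_system_general U hUo hUc G hhol p hfix ι V hVnhds hVfund hVorb
end

section
/- Let U ⊆ ℂⁿ be a nonempty connected open set and let G be a subgroup of the group of permutations of U all of whose elements are holomorphic. Assume G has a finite orbit {x₁, …, x_r} ⊆ U, and that for each j ∈ {1, …, r} there is a fundamental system of neighborhoods {V_ν^j}_ν of x_j in U such that, for each index ν, the union V_ν = V_ν¹ ∪ ⋯ ∪ V_ν^r is invariant under every element of G, the sets V_ν^j and V_ν^ℓ are disjoint for j ≠ ℓ, and every point of V_ν has finite G-orbit. Then G is periodic, i.e., every element of G has finite order. -/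
open scoped Classical

/-- A group of holomorphic permutations of a nonempty connected open set `U ⊆ ℂⁿ`
having a finite orbit `{x₁, …, x_r}` which admits a compatible system of pairwise
disjoint fundamental neighborhoods whose unions are `G`-invariant and consist of
points with finite `G`-orbit, is periodic. -/
theorem periodic_of_invariant_fundamental_system_of_finite_orbit
    {n : ℕ} (hn : 1 ≤ n) (U : Set (Fin n → ℂ)) (hUne : U.Nonempty)
    (hUo : IsOpen U) (hUc : IsConnected U)
    (G : Subgroup (Equiv.Perm U))
    (hhol : ∀ g ∈ G, ∀ x ∈ U, AnalyticAt ℂ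
      (fun y => if h : y ∈ U then ((g ⟨y, h⟩ : U) : Fin n → ℂ) else y) x)
    (r : ℕ) (hr : 1 ≤ r) (x : Fin r → U) (hxinj : Function.Injective x)
    (horbit : MulAction.orbit G (x ⟨0, hr⟩) = Set.range x)
    (ι : Type) (V : ι → Fin r → Set (Fin n → ℂ))
    (hVsub : ∀ ν j, V ν j ⊆ U)
    (hVnhds : ∀ ν j, V ν j ∈ nhds ((x j : Fin n → ℂ)))
    (hVfund : ∀ j, ∀ W ∈ nhds ((x j : Fin n → ℂ)), ∃ ν, V ν j ⊆ W)
    (hVdisj : ∀ ν, ∀ j l : Fin r, j ≠ l → Disjoint (V ν j) (V ν l))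
    (hVinv : ∀ ν, ∀ g ∈ G, ∀ y : U,
      (y : Fin n → ℂ) ∈ ⋃ j, V ν j ↔ (g y : Fin n → ℂ) ∈ ⋃ j, V ν j)
    (hVorb : ∀ ν, ∀ y : U, (y : Fin n → ℂ) ∈ ⋃ j, V ν j →
      (MulAction.orbit G y).Finite) :
    ∀ g ∈ G, ∃ m : ℕ, 1 ≤ m ∧ g ^ m = 1 := by
  intro g hg
  -- pick some index ν₀
  obtain ⟨ν₀, -⟩ := hVfund ⟨0, hr⟩ Set.univ Filter.univ_mem
  set S : Set (Fin n → ℂ) := ⋃ j, V ν₀ j with hS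
  have hSU : S ⊆ U := Set.iUnion_subset (hVsub ν₀)
  set x₀ : Fin n → ℂ := (x ⟨0, hr⟩ : Fin n → ℂ) with hx₀def
  have hx₀S : S ∈ nhds x₀ :=
    Filter.mem_of_superset (hVnhds ν₀ ⟨0, hr⟩) (Set.subset_iUnion _ _)
  have hx₀ : x₀ ∈ interior S := mem_interior_iff_mem_nhds.2 hx₀S
  obtain ⟨ρ, hρpos, hρ⟩ := Metric.nhds_basis_closedBall.mem_iff.1
    (isOpen_interior.mem_nhds hx₀)
  have hballU : Metric.closedBall x₀ ρ ⊆ U := fun y hy => hSU (interior_subset (hρ hy))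
  -- analytic extensions of the powers of g
  set E : ℕ → (Fin n → ℂ) → (Fin n → ℂ) :=
    fun m y => if h : y ∈ U then (((g ^ m) ⟨y, h⟩ : U) : Fin n → ℂ) else y with hE
  have han : ∀ m : ℕ, ∀ z ∈ U, AnalyticAt ℂ (E m) z :=
    fun m => hhol (g ^ m) (pow_mem hg m)
  -- every point of interior S is fixed by some positive power of g
  have key : ∀ y : Fin n → ℂ, y ∈ interior S → ∃ m : ℕ, 1 ≤ m ∧ E m y = y := by
    intro y hy
    have hyU : y ∈ U := hSU (interior_subset hy)
    have hfin := hVorb ν₀ ⟨y, hyU⟩ (interior_subset hy)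
    have : Finite (MulAction.orbit G (⟨y, hyU⟩ : U)) := hfin.to_subtype
    have hmem : ∀ t : ℕ, (g ^ t) ⟨y, hyU⟩ ∈ MulAction.orbit G (⟨y, hyU⟩ : U) := by
      intro t
      have h1 := MulAction.mem_orbit (⟨y, hyU⟩ : U) ((⟨g, hg⟩ : G) ^ t)
      simpa [Subgroup.smul_def, Equiv.Perm.smul_def] using h1
    obtain ⟨a, b, hab, heq⟩ := Finite.exists_ne_map_eq_of_infinite
      (fun t : ℕ => (⟨(g ^ t) ⟨y, hyU⟩, hmem t⟩ : MulAction.orbit G (⟨y, hyU⟩ : U)))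
    have heq' : (g ^ a) ⟨y, hyU⟩ = (g ^ b) ⟨y, hyU⟩ := by
      simpa [Subtype.ext_iff] using heq
    -- reduce to a < b
    rcases hab.lt_or_gt with h | h
    · refine ⟨b - a, by omega, ?_⟩
      have hba : a + (b - a) = b := by omega
      have : (g ^ a) ((g ^ (b - a)) ⟨y, hyU⟩) = (g ^ a) ⟨y, hyU⟩ := by
        rw [← Equiv.Perm.mul_apply, ← pow_add, hba, ← heq']
      have hfix : (g ^ (b - a)) ⟨y, hyU⟩ = ⟨y, hyU⟩ := (g ^ a).injective this
      simp only [hE, dif_pos hyU, hfix]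
    · refine ⟨a - b, by omega, ?_⟩
      have hba : b + (a - b) = a := by omega
      have : (g ^ b) ((g ^ (a - b)) ⟨y, hyU⟩) = (g ^ b) ⟨y, hyU⟩ := by
        rw [← Equiv.Perm.mul_apply, ← pow_add, hba, heq']
      have hfix : (g ^ (a - b)) ⟨y, hyU⟩ = ⟨y, hyU⟩ := (g ^ b).injective this
      simp only [hE, dif_pos hyU, hfix]
  -- the Baire category argument
  set f : ℕ → Set (Fin n → ℂ) := fun m =>
    match m with
    | 0 => (Metric.ball x₀ ρ)ᶜ
    | (m + 1) => Metric.closedBall x₀ ρ ∩ (fun y => E (m + 1) y - y) ⁻¹' {0}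
    with hf
  have hclosed : ∀ m, IsClosed (f m) := by
    intro m
    match m with
    | 0 => exact Metric.isOpen_ball.isClosed_compl
    | (m + 1) =>
      have hcont : ContinuousOn (fun y => E (m + 1) y - y) (Metric.closedBall x₀ ρ) :=
        fun y hy =>
          ((han (m + 1) y (hballU hy)).continuousAt.continuousWithinAt).sub
            continuousWithinAt_id
      exact hcont.preimage_isClosed_of_isClosed Metric.isClosed_closedBall isClosed_singleton
  have hcover : ⋃ m, f m = Set.univ := by
    apply Set.eq_univ_of_forall
    intro y
    by_cases hy : y ∈ Metric.ball x₀ ρ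
    · have hyI : y ∈ interior S := hρ (Metric.ball_subset_closedBall hy)
      obtain ⟨m, hm1, hmfix⟩ := key y hyI
      refine Set.mem_iUnion.2 ⟨(m - 1) + 1, ?_⟩
      have hmm : m - 1 + 1 = m := by omega
      rw [hf]
      refine ⟨Metric.ball_subset_closedBall hy, ?_⟩
      simp only [Set.mem_preimage, Set.mem_singleton_iff, hmm, hmfix, sub_self]
    · exact Set.mem_iUnion.2 ⟨0, hy⟩
  have hdense := dense_iUnion_interior_of_closed hclosed hcover
  obtain ⟨z, hz⟩ := Dense.exists_mem_open hdense Metric.isOpen_ball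
    ⟨x₀, Metric.mem_ball_self hρpos⟩
  obtain ⟨hz1, hz2⟩ := hz
  obtain ⟨i, hzi⟩ := Set.mem_iUnion.1 hz1
  match i with
  | 0 =>
    exact absurd hz2 (interior_subset hzi)
  | (m + 1) =>
    -- identity theorem: E (m+1) = id on U
    refine ⟨m + 1, Nat.succ_le_succ (Nat.zero_le m), ?_⟩
    have hzU : z ∈ U := hballU (interior_subset hzi).1
    have hA1 : AnalyticOnNhd ℂ (E (m + 1)) U := fun w hw => han (m + 1) w hw
    have hA2 : AnalyticOnNhd ℂ (id : (Fin n → ℂ) → (Fin n → ℂ)) U :=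
      fun w _ => analyticAt_id
    have hev : E (m + 1) =ᶠ[nhds z] id := by
      filter_upwards [isOpen_interior.mem_nhds hzi] with w hw
      have h0 : E (m + 1) w - w = 0 := (interior_subset hw).2
      have := sub_eq_zero.1 h0
      simpa using this
    have hEq : Set.EqOn (E (m + 1)) id U :=
      hA1.eqOn_of_preconnected_of_eventuallyEq hA2 hUc.isPreconnected hzU hev
    apply Equiv.ext
    intro u
    show (g ^ (m + 1)) u = u
    have hu := hEq u.2
    exact Subtype.ext (by simpa [hE, dif_pos u.2] using hu)
end

section
/- Let U ⊆ ℂⁿ be a nonempty connected open set and let G be a (not necessarily finitely generated) subgroup of the group of permutations of U all of whose elements are holomorphic. If the set Ω(G) = {x ∈ U : the G-orbit of x is finite} has positive Lebesgue measure, then G is periodic of finite exponent: there exists m ≥ 1 such that g^m = id for every g ∈ G. -/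
open MeasureTheory
open scoped Classical

/-!
If `x` has a finite `G`-orbit with at most `k` points, then every `g ∈ G` has period at most `k`
at `x`, so `g ^ k !` fixes `x`. The sets `Ω_k` of points whose orbit has at most `k` points
exhaust `Ω(G)`, so one of them has positive measure, and `g ^ k !` fixes it pointwise.

The zero set of a holomorphic function on a connected open subset of `ℂⁿ` that does not vanish
identically is Lebesgue-null: in one variable its zeros are isolated, and in general one slices a
small polydisc and applies Fubini, using the identity theorem on each slice. Hence the holomorphic
map `g ^ k ! - id`, which vanishes on `Ω_k`, vanishes on all of `U`.
-/

open Metric Filter Set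
open scoped Nat

theorem MulAction.pow_factorial_smul_eq_of_ncard_orbit_le {G α : Type*} [Group G] [MulAction G α]
    {x : α} {k : ℕ} (hfin : (orbit G x).Finite) (hk : (orbit G x).ncard ≤ k) (g : G) :
    g ^ k ! • x = x := by
  have hsub : orbit (Subgroup.zpowers g) x ⊆ orbit G x := orbit_subgroup_subset _ x
  have : Fintype (orbit (Subgroup.zpowers g) x) := (hfin.subset hsub).fintype
  rw [pow_smul_eq_iff_minimalPeriod_dvd]
  refine Nat.dvd_factorial (NeZero.pos _) (le_trans ?_ hk)
  rw [minimalPeriod_eq_card, ← Nat.card_eq_fintype_card, Nat.card_coe_set_eq]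
  exact Set.ncard_le_ncard hsub hfin

theorem ContinuousOn.measurableSet_inter_preimage {X Y : Type*} [TopologicalSpace X]
    [MeasurableSpace X] [OpensMeasurableSpace X] [TopologicalSpace Y] {f : X → Y} {W : Set X}
    {t : Set Y} (hf : ContinuousOn f W) (hW : IsOpen W) (ht : IsClosed t) :
    MeasurableSet (W ∩ f ⁻¹' t) := by
  have hopen : IsOpen (W ∩ f ⁻¹' tᶜ) := hf.isOpen_inter_preimage hW ht.isOpen_compl
  convert hW.measurableSet.diff hopen.measurableSet using 1
  rw [sdiff_self_inter, preimage_compl, sdiff_compl]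

theorem volume_preserving_consEquivL_symm {n : ℕ} {R α : Type*} [Semiring R] [AddCommMonoid α]
    [Module R α] [TopologicalSpace α] [MeasureSpace α] [SigmaFinite (volume : Measure α)] :
    MeasurePreserving (Fin.consEquivL R (fun _ : Fin (n + 1) => α)).symm := by
  convert volume_preserving_piFinSuccAbove (fun _ : Fin (n + 1) => α) 0 using 1
  ext x j
  · rfl
  · simp

section NullZeroSets

variable {E : Type*} [NormedAddCommGroup E] [NormedSpace ℂ E]

variable (E) in
def NullAnalyticZeroSets (X : Type*) [NormedAddCommGroup X] [NormedSpace ℂ X] [MeasureSpace X] :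
    Prop :=
  ∀ (f : X → E) (W : Set X), IsOpen W → IsPreconnected W → AnalyticOnNhd ℂ f W →
    ¬ EqOn f 0 W → volume (W ∩ f ⁻¹' {0}) = 0

theorem nullAnalyticZeroSets_complex : NullAnalyticZeroSets E ℂ := by
  intro f W hW hWc hf hf0
  have hne : ∀ᶠ z in codiscreteWithin W, f z ≠ 0 :=
    (hf.eqOn_zero_or_eventually_ne_zero_of_preconnected hWc).resolve_left hf0
  have hae : ∀ᵐ z ∂volume.restrict W, f z ≠ 0 :=
    ae_restrict_le_codiscreteWithin hW.measurableSet hne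
  rw [ae_iff, Measure.restrict_apply' hW.measurableSet] at hae
  simp only [ne_eq, not_not] at hae
  rwa [inter_comm]

variable {X Y : Type*} [NormedAddCommGroup X] [NormedSpace ℂ X] [MeasureSpace X]
  [NormedAddCommGroup Y] [NormedSpace ℂ Y] [MeasureSpace Y]

theorem NullAnalyticZeroSets.volume_prod_inter_preimage_zero [SecondCountableTopologyEither X Y]
    [OpensMeasurableSpace X] [OpensMeasurableSpace Y]
    (hX : NullAnalyticZeroSets E X) (hY : NullAnalyticZeroSets E Y) {f : X × Y → E}
    {D₁ : Set X} {D₂ : Set Y} (hD₁ : IsOpen D₁) (hD₁c : IsPreconnected D₁)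
    (hD₂ : IsOpen D₂) (hD₂c : IsPreconnected D₂) (hf : AnalyticOnNhd ℂ f (D₁ ×ˢ D₂))
    (hf0 : ¬ EqOn f 0 (D₁ ×ˢ D₂)) :
    volume (D₁ ×ˢ D₂ ∩ f ⁻¹' {0}) = 0 := by
  obtain ⟨c₁, hc₁, c₂, hc₂, hfc⟩ : ∃ x ∈ D₁, ∃ y ∈ D₂, f (x, y) ≠ 0 := by
    simpa [EqOn] using hf0
  have hslice₁ : ∀ y ∈ D₂, AnalyticOnNhd ℂ (fun x => f (x, y)) D₁ := fun y hy x hx =>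
    (hf _ ⟨hx, hy⟩).comp (analyticAt_id.prod analyticAt_const)
  have hslice₂ : ∀ x ∈ D₁, AnalyticOnNhd ℂ (fun y => f (x, y)) D₂ := fun x hx y hy =>
    (hf _ ⟨hx, hy⟩).comp (analyticAt_const.prod analyticAt_id)
  have hN : volume (D₁ ∩ (fun x => f (x, c₂)) ⁻¹' {0}) = 0 :=
    hX _ _ hD₁ hD₁c (hslice₁ c₂ hc₂) fun h => hfc (h hc₁)
  rw [Measure.volume_eq_prod]
  refine Measure.measure_prod_null_of_ae_null
    (hf.continuousOn.measurableSet_inter_preimage (hD₁.prod hD₂) isClosed_singleton) ?_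
  filter_upwards [measure_eq_zero_iff_ae_notMem.mp hN] with x hx
  by_cases hx₁ : x ∈ D₁
  · have hfiber : Prod.mk x ⁻¹' (D₁ ×ˢ D₂ ∩ f ⁻¹' {0}) =
        D₂ ∩ (fun y => f (x, y)) ⁻¹' {0} := by
      ext y; simp [hx₁]
    rw [hfiber]
    exact hY _ _ hD₂ hD₂c (hslice₂ x hx₁) fun h => hx ⟨hx₁, h hc₂⟩
  · have hfiber : Prod.mk x ⁻¹' (D₁ ×ˢ D₂ ∩ f ⁻¹' {0}) = ∅ := by
      ext y; simp [hx₁]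
    simp [hfiber]

theorem NullAnalyticZeroSets.prod [SecondCountableTopology X] [SecondCountableTopology Y]
    [OpensMeasurableSpace X] [OpensMeasurableSpace Y]
    (hX : NullAnalyticZeroSets E X) (hY : NullAnalyticZeroSets E Y) :
    NullAnalyticZeroSets E (X × Y) := by
  intro f W hW hWc hf hf0
  refine measure_null_of_locally_null _ fun a ha => ?_
  obtain ⟨r, hr, hball⟩ := Metric.isOpen_iff.mp hW a ha.1
  have hne : ¬ EqOn f 0 (ball a r) := fun h => hf0 <|
    hf.eqOn_zero_of_preconnected_of_eventuallyEq_zero hWc ha.1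
      (eventuallyEq_of_mem (ball_mem_nhds a hr) h)
  refine ⟨ball a r ∩ f ⁻¹' {0}, mem_nhdsWithin.mpr
    ⟨ball a r, isOpen_ball, mem_ball_self hr, fun x hx => ⟨hx.1, hx.2.2⟩⟩, ?_⟩
  rw [← ball_prod_same] at hball hne ⊢
  exact hX.volume_prod_inter_preimage_zero hY isOpen_ball (convex_ball _ _).isPreconnected
    isOpen_ball (convex_ball _ _).isPreconnected (hf.mono hball) hne

theorem NullAnalyticZeroSets.of_measurePreserving (hY : NullAnalyticZeroSets E Y)
    (e : X ≃L[ℂ] Y) (he : MeasurePreserving e) : NullAnalyticZeroSets E X := by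
  intro f W hW hWc hf hf0
  have hpre : W ∩ f ⁻¹' {0} = e ⁻¹' (e.symm ⁻¹' W ∩ (f ∘ e.symm) ⁻¹' {0}) := by
    ext x; simp
  rw [hpre]
  refine he.quasiMeasurePreserving.preimage_null (hY _ _ (hW.preimage e.symm.continuous) ?_ ?_ ?_)
  · rw [← e.symm.image_symm_eq_preimage, e.symm_symm]
    exact hWc.image e e.continuous.continuousOn
  · exact fun y hy => (hf _ hy).comp ((e.symm : Y →L[ℂ] X).analyticAt y)
  · exact fun h => hf0 fun x hx => by simpa using h (show e x ∈ e.symm ⁻¹' W by simpa)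

theorem nullAnalyticZeroSets_pi : ∀ n : ℕ, NullAnalyticZeroSets E (Fin n → ℂ)
  | 0 => fun f W _ _ _ hf0 => by
    have hempty : W ∩ f ⁻¹' {0} = ∅ := eq_empty_of_forall_notMem fun x hx =>
      hf0 fun y _ => Subsingleton.elim x y ▸ hx.2
    rw [hempty, measure_empty]
  | n + 1 => (nullAnalyticZeroSets_complex.prod (nullAnalyticZeroSets_pi n)).of_measurePreserving
      _ volume_preserving_consEquivL_symm

theorem AnalyticOnNhd.eqOn_of_volume_ne_zero {n : ℕ} {f g : (Fin n → ℂ) → E}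
    {U : Set (Fin n → ℂ)} (hf : AnalyticOnNhd ℂ f U) (hg : AnalyticOnNhd ℂ g U)
    (hUo : IsOpen U) (hUc : IsPreconnected U) (hfg : volume (U ∩ {x | f x = g x}) ≠ 0) :
    EqOn f g U := by
  by_contra hne
  refine hfg ?_
  have := nullAnalyticZeroSets_pi n (f - g) U hUo hUc (hf.sub hg)
    fun h => hne fun x hx => sub_eq_zero.mp (h hx)
  simpa [preimage, sub_eq_zero] using this

end NullZeroSets

theorem finite_exponent_of_measure_pos_general
    {n : ℕ} (U : Set (Fin n → ℂ))
    (hUo : IsOpen U) (hUc : IsConnected U)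
    (G : Subgroup (Equiv.Perm U))
    (hhol : ∀ g ∈ G, ∀ x ∈ U, AnalyticAt ℂ
      (fun y => if h : y ∈ U then ((g ⟨y, h⟩ : U) : Fin n → ℂ) else y) x)
    (hmeas : 0 < volume {x : Fin n → ℂ | ∃ hx : x ∈ U,
      (MulAction.orbit G (⟨x, hx⟩ : U)).Finite}) :
    ∃ m : ℕ, 1 ≤ m ∧ ∀ g ∈ G, g ^ m = 1 := by
  obtain ⟨k, hk⟩ : ∃ k : ℕ, 0 < volume {x | ∃ hx : x ∈ U,
      (MulAction.orbit G (⟨x, hx⟩ : U)).Finite ∧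
        (MulAction.orbit G (⟨x, hx⟩ : U)).ncard ≤ k} := by
    refine exists_measure_pos_of_not_measure_iUnion_null fun h => hmeas.ne' (measure_mono_null ?_ h)
    rintro x ⟨hx, hfin⟩
    exact mem_iUnion.mpr ⟨_, hx, hfin, le_rfl⟩
  refine ⟨k !, k.factorial_pos, fun g hg => ?_⟩
  set F : (Fin n → ℂ) → (Fin n → ℂ) :=
    fun y => if h : y ∈ U then ((g ^ k !) ⟨y, h⟩ : Fin n → ℂ) else y
  have hfix : volume (U ∩ {x | F x = id x}) ≠ 0 := by
    refine (hk.trans_le (measure_mono ?_)).ne'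
    rintro x ⟨hx, hfin, hcard⟩
    have hgx := MulAction.pow_factorial_smul_eq_of_ncard_orbit_le hfin hcard ⟨g, hg⟩
    rw [Subgroup.smul_def, SubgroupClass.coe_pow, Equiv.Perm.smul_def] at hgx
    exact ⟨hx, by simp [F, hx, hgx]⟩
  have hF : EqOn F id U := AnalyticOnNhd.eqOn_of_volume_ne_zero (hhol _ (pow_mem hg _))
    analyticOnNhd_id hUo hUc.isPreconnected hfix
  exact Equiv.ext fun ⟨x, hx⟩ => Subtype.ext (by simpa [F, hx] using hF hx)

/-- If the set of points with finite orbit of a (not necessarily finitely generated)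
group of holomorphic permutations of a nonempty connected open set `U ⊆ ℂⁿ` has
positive Lebesgue measure, then the group is periodic of finite exponent. -/
theorem finite_exponent_of_measure_pos
    {n : ℕ} (hn : 1 ≤ n) (U : Set (Fin n → ℂ)) (hUne : U.Nonempty)
    (hUo : IsOpen U) (hUc : IsConnected U)
    (G : Subgroup (Equiv.Perm U))
    (hhol : ∀ g ∈ G, ∀ x ∈ U, AnalyticAt ℂ
      (fun y => if h : y ∈ U then ((g ⟨y, h⟩ : U) : Fin n → ℂ) else y) x)
    (hmeas : 0 < volume {x : Fin n → ℂ | ∃ hx : x ∈ U,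
      (MulAction.orbit G (⟨x, hx⟩ : U)).Finite}) :
    ∃ m : ℕ, 1 ≤ m ∧ ∀ g ∈ G, g ^ m = 1 :=
  finite_exponent_of_measure_pos_general U hUo hUc G hhol hmeas
end

section
/- Let U ⊆ ℂⁿ be a nonempty connected open set and let g be a permutation of U that is holomorphic (the map x ↦ g(x) from U to ℂⁿ is complex analytic at every point of U). If every point x ∈ U is periodic under g, i.e., for each x ∈ U there exists n ≥ 1 with gⁿ(x) = x, then g has finite order: there exists n ≥ 1 such that gⁿ is the identity map of U. -/
open scoped Classical

/-- A holomorphic permutation of a nonempty connected open set `U ⊆ ℂⁿ` under which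
every point is periodic has finite order. -/
theorem finite_order_of_all_points_periodic
    {n : ℕ} (hn : 1 ≤ n) (U : Set (Fin n → ℂ)) (hUne : U.Nonempty)
    (hUo : IsOpen U) (hUc : IsConnected U)
    (g : Equiv.Perm U)
    (hhol : ∀ x ∈ U, AnalyticAt ℂ
      (fun y => if h : y ∈ U then ((g ⟨y, h⟩ : U) : Fin n → ℂ) else y) x)
    (hper : ∀ x : U, ∃ m : ℕ, 1 ≤ m ∧ (g ^ m) x = x) :
    ∃ m : ℕ, 1 ≤ m ∧ g ^ m = 1 := by
  set f : (Fin n → ℂ) → (Fin n → ℂ) :=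
    fun y => if h : y ∈ U then ((g ⟨y, h⟩ : U) : Fin n → ℂ) else y with hf
  have hfU : ∀ x (h : x ∈ U), f x = ((g ⟨x, h⟩ : U) : Fin n → ℂ) := by
    intro x h; simp [hf, h]
  have hfmem : ∀ x ∈ U, f x ∈ U := by
    intro x h; rw [hfU x h]; exact (g ⟨x, h⟩).2
  -- iterates of f agree with powers of g on U
  have hiter : ∀ m : ℕ, ∀ x (h : x ∈ U), f^[m] x = (((g ^ m) ⟨x, h⟩ : U) : Fin n → ℂ) := by
    intro m
    induction m with
    | zero => intro x h; simp
    | succ k ih =>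
      intro x h
      have hx' : (⟨f x, hfmem x h⟩ : U) = g ⟨x, h⟩ := Subtype.ext (hfU x h)
      rw [Function.iterate_succ_apply, ih (f x) (hfmem x h), hx', pow_succ]
      rfl
  -- f is analytic on U, hence so are its iterates
  have hiterAn : ∀ m : ℕ, ∀ x ∈ U, AnalyticAt ℂ (f^[m]) x := by
    intro m
    induction m with
    | zero => intro x _; simpa using analyticAt_id (𝕜 := ℂ)
    | succ k ih =>
      intro x hx
      rw [Function.iterate_succ]
      exact (ih _ (hfmem x hx)).comp (hhol x hx)
  -- continuity of g as a map U → U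
  have hcontf : ∀ x ∈ U, ContinuousAt f x := fun x hx => (hhol x hx).continuousAt
  have hcg : Continuous (⇑g : U → U) := by
    rw [continuous_iff_continuousAt]
    intro x
    have h1 : ContinuousAt (fun y : U => f (y : Fin n → ℂ)) x :=
      (hcontf _ x.2).comp continuous_subtype_val.continuousAt
    have h2 : ∀ y : U, f (y : Fin n → ℂ) = ((g y : U) : Fin n → ℂ) := by
      intro y; rw [hfU _ y.2]
    have : ContinuousAt (fun y : U => ((g y : U) : Fin n → ℂ)) x := by
      simpa [h2] using h1
    exact this.codRestrict _
  have hcgm : ∀ m : ℕ, Continuous (⇑(g ^ m) : U → U) := by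
    intro m
    have : ⇑(g ^ m) = (⇑g)^[m] := (Equiv.Perm.iterate_eq_pow g m).symm
    rw [this]
    exact hcg.iterate m
  -- Baire category on U
  haveI : LocallyCompactSpace U := hUo.locallyCompactSpace
  haveI : Nonempty U := hUne.to_subtype
  have hcover : (⋃ m : ℕ, {x : U | (g ^ (m + 1)) x = x}) = Set.univ := by
    ext x
    simp only [Set.mem_iUnion, Set.mem_univ, iff_true, Set.mem_setOf_eq]
    obtain ⟨m, hm1, hmx⟩ := hper x
    exact ⟨m - 1, by rwa [Nat.sub_add_cancel hm1]⟩
  have hclosed : ∀ m : ℕ, IsClosed {x : U | (g ^ (m + 1)) x = x} :=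
    fun m => isClosed_eq (hcgm (m + 1)) (continuous_id : Continuous fun x : U => x)
  obtain ⟨m, x0, hx0⟩ := nonempty_interior_of_iUnion_of_closed hclosed hcover
  -- transfer the interior to an open set in ℂⁿ
  have hsub : interior {x : U | (g ^ (m + 1)) x = x} ∈ nhds x0 :=
    isOpen_interior.mem_nhds hx0
  -- identity theorem
  have hFan : AnalyticOnNhd ℂ (f^[m + 1]) U := fun x hx => hiterAn (m + 1) x hx
  have hidan : AnalyticOnNhd ℂ (id : (Fin n → ℂ) → (Fin n → ℂ)) U :=
    fun x _ => analyticAt_id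
  have hev : f^[m + 1] =ᶠ[nhds (x0 : Fin n → ℂ)] id := by
    have hval : Filter.map (Subtype.val : U → Fin n → ℂ) (nhds x0) = nhds (x0 : Fin n → ℂ) :=
      (hUo.isOpenEmbedding_subtypeVal).map_nhds_eq x0
    rw [← hval]
    refine Filter.mem_map.mpr ?_
    filter_upwards [hsub] with y hy
    have hy'' := interior_subset hy
    have hy' : (g ^ (m + 1)) y = y := hy''
    show f^[m + 1] (y : Fin n → ℂ) = id (y : Fin n → ℂ)
    rw [hiter (m + 1) _ y.2]
    simpa using congrArg Subtype.val hy'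
  have heq : Set.EqOn (f^[m + 1]) id U :=
    hFan.eqOn_of_preconnected_of_eventuallyEq hidan hUc.isPreconnected x0.2 hev
  refine ⟨m + 1, Nat.le_add_left 1 m, ?_⟩
  refine Equiv.Perm.ext fun x => ?_
  have := heq x.2
  rw [hiter (m + 1) _ x.2] at this
  simpa using Subtype.ext this
end
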